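/- arXiv:2409.00229 — 11 statements merged into one kernel-verified Lean document; each statement's English description precedes it below -/
import Mathlib

section
/- The sequence of partial sums G_n(α) = ∑_{k=2}^{n} α/(A k + α·B k) converges uniformly on [0, +∞) as n → ∞; consequently the series ∑_{k=2}^∞ α/(A k + α·B k) defines a function of α that is the uniform limit of its partial sums on [0, +∞). -/
/-!
By Binet's formula `A (k + 2) = F (k + 1)` and `B (k + 2) = F k` are Fibonacci numbers, so for
`α ≥ 0` the term `α / (A k + α * B k)` lies between `0` and `1 / B k = 1 / F (k - 2)` once `k ≥ 3`,
uniformly in `α`. Since `φ ^ n ≤ 2 F (n + 1)`, the reciprocal Fibonacci series is dominated by a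
geometric one, and the Weierstrass M-test applies; the single unbounded term `k = 2` (equal to `α`)
does not affect uniform convergence.
-/

open Filter Finset

theorem Finset.sum_Icc_eq_sum_range {M : Type*} [AddCommMonoid M] (f : ℕ → M) (m n : ℕ) :
    ∑ k ∈ Icc m n, f k = ∑ k ∈ range (n + 1 - m), f (k + m) := by
  rw [← Finset.Ico_add_one_right_eq_Icc, Finset.sum_Ico_eq_sum_range]
  simp only [add_comm m]

theorem tendstoUniformlyOn_sum_Icc_tsum {β F : Type*} [NormedAddCommGroup F] [CompleteSpace F]
    {f : ℕ → β → F} {u : ℕ → ℝ} {s : Set β} (m : ℕ) (hu : Summable u)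
    (hfu : ∀ᶠ k in atTop, ∀ x ∈ s, ‖f (k + m) x‖ ≤ u k) :
    TendstoUniformlyOn (fun n x => ∑ k ∈ Icc m n, f k x) (fun x => ∑' k, f (k + m) x) atTop s := by
  have hshift : Tendsto (fun n => n + 1 - m) atTop atTop :=
    (tendsto_sub_atTop_nat m).comp (tendsto_add_atTop_nat 1)
  simp only [Finset.sum_Icc_eq_sum_range]
  exact fun v hv => hshift.eventually (tendstoUniformlyOn_tsum_nat_eventually hu hfu v hv)

namespace Real

theorem coe_fib_eq_div (n : ℕ) :
    (Nat.fib n : ℝ) = (goldenRatio ^ n - goldenConj ^ n) / (goldenRatio - goldenConj) := by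
  rw [coe_fib_eq, goldenRatio_sub_goldenConj]

theorem coe_fib_eq_mul_pow_succ_div (n : ℕ) :
    (Nat.fib n : ℝ) = (goldenRatio * goldenConj ^ (n + 1) - goldenConj * goldenRatio ^ (n + 1)) /
      (goldenRatio - goldenConj) := by
  rw [coe_fib_eq_div]
  congr 1
  linear_combination (goldenRatio ^ n - goldenConj ^ n) * goldenRatio_mul_goldenConj

theorem goldenRatio_pow_le_two_mul_fib_succ (n : ℕ) : goldenRatio ^ n ≤ 2 * Nat.fib (n + 1) := by
  have hfib : (Nat.fib n : ℝ) ≤ Nat.fib (n + 1) := by exact_mod_cast Nat.fib_le_fib_succ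
  rw [← fib_succ_sub_goldenConj_mul_fib]
  nlinarith [neg_one_lt_goldenConj, goldenConj_neg, Nat.cast_nonneg (α := ℝ) (Nat.fib n)]

end Real

theorem summable_inv_fib : Summable fun n => ((Nat.fib n : ℝ))⁻¹ := by
  rw [← summable_nat_add_iff 1]
  refine Summable.of_nonneg_of_le (fun n => by positivity) (fun n => ?_)
    ((summable_geometric_of_lt_one (inv_nonneg.2 Real.goldenRatio_pos.le)
      (inv_lt_one_of_one_lt₀ Real.one_lt_goldenRatio)).mul_left 2)
  have hfib : (0 : ℝ) < Nat.fib (n + 1) := by exact_mod_cast Nat.fib_pos.2 n.succ_pos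
  rw [inv_pow, ← div_eq_mul_inv, le_div_iff₀ (by positivity), inv_mul_le_iff₀ hfib]
  linarith [Real.goldenRatio_pow_le_two_mul_fib_succ n]

theorem norm_div_add_mul_le_inv {a b x : ℝ} (ha : 0 ≤ a) (hb : 0 < b) (hx : 0 ≤ x) :
    ‖x / (a + x * b)‖ ≤ b⁻¹ := by
  rw [Real.norm_of_nonneg (by positivity)]
  refine div_le_of_le_mul₀ (by positivity) (inv_nonneg.2 hb.le) ?_
  rw [mul_add, mul_comm x b, inv_mul_cancel_left₀ hb.ne']
  exact le_add_of_nonneg_left (by positivity)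

/-- the partial sums `G_n(α) = ∑_{k=2}^n α/(A k + α·B k)` converge
uniformly on `[0, +∞)`; that is, there is a function `G` on `ℝ` which is the
uniform limit of the partial sums on `[0, +∞)`. -/
theorem G_tendstoUniformlyOn (φ ψ : ℝ)
    (hφ : φ = (1 + Real.sqrt 5) / 2) (hψ : ψ = (1 - Real.sqrt 5) / 2)
    (A B : ℕ → ℝ)
    (hA : ∀ n, A n = (φ ^ (n - 1) - ψ ^ (n - 1)) / (φ - ψ))
    (hB : ∀ n, B n = (φ * ψ ^ (n - 1) - ψ * φ ^ (n - 1)) / (φ - ψ)) :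
    ∃ G : ℝ → ℝ,
      TendstoUniformlyOn
        (fun (n : ℕ) (α : ℝ) => ∑ k ∈ Finset.Icc 2 n, α / (A k + α * B k))
        G Filter.atTop (Set.Ici 0) := by
  subst hφ hψ
  have hA2 (k : ℕ) : A (k + 2) = Nat.fib (k + 1) := (hA _).trans (Real.coe_fib_eq_div _).symm
  have hB2 (k : ℕ) : B (k + 2) = Nat.fib k :=
    (hB _).trans (Real.coe_fib_eq_mul_pow_succ_div k).symm
  refine ⟨_, tendstoUniformlyOn_sum_Icc_tsum 2 summable_inv_fib ?_⟩
  filter_upwards [eventually_ge_atTop 1] with k hk α hα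
  rw [hA2, hB2]
  exact norm_div_add_mul_le_inv (Nat.cast_nonneg _) (by exact_mod_cast Nat.fib_pos.2 hk) hα
end

section
/- The function 𝓕(α) = 1 + α + ∑_{k=3}^∞ α/(A k + α·B k) is differentiable on (0, +∞) and satisfies 𝓕′(α) ≥ 1 for all α > 0; in particular, for all 0 < α₁ < α₂ one has 𝓕(α₂) − 𝓕(α₁) ≥ α₂ − α₁, so 𝓕 is strictly increasing on (0, +∞). -/
/-!
Binet's formula turns the denominators into `F_{k+2} + α F_{k+1}` (Fibonacci numbers), so each
summand `α / (F_{k+2} + α F_{k+1})` is increasing with derivative `F_{k+2} / (F_{k+2} + α F_{k+1})²`,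
which lies in `[0, 1 / F_{k+2}]` for `α ≥ 0`. Since `F_{k+2} ≥ φ^k`, these bounds are summable, so the
series may be differentiated term by term and `𝓕' = 1 + (nonnegative) ≥ 1`; the mean value
theorem then gives `𝓕 α₂ - 𝓕 α₁ ≥ α₂ - α₁`.
-/

open Real Set

theorem goldenRatio_pow_le_fib_add_two : ∀ n : ℕ, goldenRatio ^ n ≤ Nat.fib (n + 2)
  | 0 => by simp
  | 1 => by norm_num [goldenRatio_lt_two.le]
  | n + 2 => by
    have h := goldenRatio_pow_le_fib_add_two n
    have h' := goldenRatio_pow_le_fib_add_two (n + 1)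
    calc goldenRatio ^ (n + 2) = goldenRatio ^ n + goldenRatio ^ (n + 1) := by
          rw [pow_add, goldenRatio_sq]; ring
      _ ≤ Nat.fib (n + 2) + Nat.fib (n + 3) := add_le_add h h'
      _ = Nat.fib (n + 4) := by rw [Nat.fib_add_two (n := n + 2)]; push_cast; ring

theorem summable_inv_fib_add_two : Summable fun n : ℕ => ((Nat.fib (n + 2) : ℝ))⁻¹ := by
  refine (summable_geometric_of_lt_one (inv_nonneg.2 goldenRatio_pos.le)
    (inv_lt_one_of_one_lt₀ one_lt_goldenRatio)).of_nonneg_of_le (fun n => by positivity)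
    fun n => ?_
  rw [inv_pow]
  exact inv_anti₀ (by positivity) (goldenRatio_pow_le_fib_add_two n)

theorem goldenRatio_pow_sub_goldenConj_pow_div (n : ℕ) :
    (goldenRatio ^ n - goldenConj ^ n) / (goldenRatio - goldenConj) = Nat.fib n := by
  rw [coe_fib_eq, goldenRatio_sub_goldenConj]

theorem goldenRatio_mul_goldenConj_pow_sub_div (n : ℕ) :
    (goldenRatio * goldenConj ^ (n + 1) - goldenConj * goldenRatio ^ (n + 1)) /
      (goldenRatio - goldenConj) = Nat.fib n := by
  rw [← goldenRatio_pow_sub_goldenConj_pow_div]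
  congr 1
  linear_combination (goldenConj ^ n - goldenRatio ^ n) * goldenRatio_mul_goldenConj

theorem hasDerivAt_div_add_mul {a b x : ℝ} (h : a + x * b ≠ 0) :
    HasDerivAt (fun y => y / (a + y * b)) (a / (a + x * b) ^ 2) x := by
  have hden : HasDerivAt (fun y => a + y * b) b x := by
    simpa using ((hasDerivAt_id x).mul_const b).const_add a
  exact ((hasDerivAt_id' x).div hden h).congr_deriv (by ring)

theorem div_add_mul_sq_le_inv {a b x : ℝ} (ha : 0 < a) (hb : 0 ≤ b) (hx : 0 ≤ x) :
    a / (a + x * b) ^ 2 ≤ a⁻¹ := by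
  have hab : a ≤ a + x * b := le_add_of_nonneg_right (mul_nonneg hx hb)
  rw [div_le_iff₀ (by positivity), ← div_eq_inv_mul, le_div_iff₀ ha]
  nlinarith

theorem hasDerivAt_tsum_div_add_mul {a b : ℕ → ℝ} (ha : ∀ k, 0 < a k) (hb : ∀ k, 0 ≤ b k)
    (hs : Summable fun k => (a k)⁻¹) {x : ℝ} (hx : 0 < x) :
    HasDerivAt (fun y => ∑' k, y / (a k + y * b k)) (∑' k, a k / (a k + x * b k) ^ 2) x := by
  have hden : ∀ k, ∀ y ∈ Ioi (0 : ℝ), 0 < a k + y * b k := fun k y hy =>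
    add_pos_of_pos_of_nonneg (ha k) (mul_nonneg (le_of_lt hy) (hb k))
  refine hasDerivAt_tsum_of_isPreconnected hs isOpen_Ioi isPreconnected_Ioi
    (fun k y hy => hasDerivAt_div_add_mul (hden k y hy).ne')
    (fun k y hy => ?_) (mem_Ioi.2 one_pos) ?_ hx
  · rw [norm_of_nonneg (div_nonneg (ha k).le (sq_nonneg _))]
    exact div_add_mul_sq_le_inv (ha k) (hb k) (le_of_lt hy)
  · refine hs.of_nonneg_of_le (fun k => (div_pos one_pos (hden k 1 (mem_Ioi.2 one_pos))).le)
      fun k => ?_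
    rw [one_div, one_mul]
    exact inv_anti₀ (ha k) (le_add_of_nonneg_right (hb k))

theorem sub_le_sub_of_one_le_hasDerivAt {f f' : ℝ → ℝ} {a b : ℝ}
    (hf : ∀ x ∈ Icc a b, HasDerivAt f (f' x) x) (hf' : ∀ x ∈ Icc a b, 1 ≤ f' x) (hab : a ≤ b) :
    b - a ≤ f b - f a := by
  have hg : ∀ x ∈ Icc a b, HasDerivAt (fun y => f y - y) (f' x - 1) x := fun x hx =>
    (hf x hx).sub (hasDerivAt_id x)
  have hmono : MonotoneOn (fun y => f y - y) (Icc a b) :=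
    monotoneOn_of_hasDerivWithinAt_nonneg (convex_Icc a b)
      (fun x hx => (hg x hx).continuousAt.continuousWithinAt)
      (fun x hx => (hg x (interior_subset hx)).hasDerivWithinAt)
      (fun x hx => sub_nonneg.2 (hf' x (interior_subset hx)))
  have := hmono (left_mem_Icc.2 hab) (right_mem_Icc.2 hab) hab
  simp only at this
  linarith

/-- the equivalent resistance `𝓕(α) = 1 + α + ∑_{k=3}^∞ α/(A k + α·B k)`
is differentiable on `(0, +∞)` with derivative `≥ 1`; in particular
`𝓕(α₂) - 𝓕(α₁) ≥ α₂ - α₁` for all `0 < α₁ < α₂`, so `𝓕` is strictly increasing. -/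
theorem F_deriv_ge_one (φ ψ : ℝ)
    (hφ : φ = (1 + Real.sqrt 5) / 2) (hψ : ψ = (1 - Real.sqrt 5) / 2)
    (A B : ℕ → ℝ)
    (hA : ∀ n, A n = (φ ^ (n - 1) - ψ ^ (n - 1)) / (φ - ψ))
    (hB : ∀ n, B n = (φ * ψ ^ (n - 1) - ψ * φ ^ (n - 1)) / (φ - ψ))
    (𝓕 : ℝ → ℝ)
    (h𝓕 : ∀ α : ℝ, 𝓕 α = 1 + α + ∑' k : ℕ, α / (A (k + 3) + α * B (k + 3))) :
    (∀ α : ℝ, 0 < α → ∃ d : ℝ, HasDerivAt 𝓕 d α ∧ 1 ≤ d) ∧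
      (∀ α₁ α₂ : ℝ, 0 < α₁ → α₁ < α₂ → α₂ - α₁ ≤ 𝓕 α₂ - 𝓕 α₁) ∧
      StrictMonoOn 𝓕 (Set.Ioi 0) := by
  subst hφ hψ
  set a : ℕ → ℝ := fun k => Nat.fib (k + 2)
  set b : ℕ → ℝ := fun k => Nat.fib (k + 1)
  have hA' : ∀ k, A (k + 3) = a k := fun k => by
    rw [hA]; exact goldenRatio_pow_sub_goldenConj_pow_div (k + 2)
  have hB' : ∀ k, B (k + 3) = b k := fun k => by
    rw [hB]; exact goldenRatio_mul_goldenConj_pow_sub_div (k + 1)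
  have hF : 𝓕 = fun α => 1 + α + ∑' k, α / (a k + α * b k) := by
    funext α
    simp only [h𝓕, hA', hB']
  set F' : ℝ → ℝ := fun α => 1 + ∑' k, a k / (a k + α * b k) ^ 2
  have hderiv : ∀ α, 0 < α → HasDerivAt 𝓕 (F' α) α := fun α hα => by
    rw [hF]
    exact ((hasDerivAt_id' α).const_add 1).add <|
      hasDerivAt_tsum_div_add_mul (a := a) (b := b)
        (fun k => Nat.cast_pos.2 (Nat.fib_pos.2 (by omega))) (fun k => by positivity)
        summable_inv_fib_add_two hα
  have hF'_ge : ∀ α, 1 ≤ F' α := fun α =>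
    le_add_of_nonneg_right (tsum_nonneg fun k => by positivity)
  have hincr : ∀ α₁ α₂ : ℝ, 0 < α₁ → α₁ < α₂ → α₂ - α₁ ≤ 𝓕 α₂ - 𝓕 α₁ :=
    fun α₁ α₂ h₁ h₁₂ => sub_le_sub_of_one_le_hasDerivAt
      (fun x hx => hderiv x (h₁.trans_le hx.1)) (fun x _ => hF'_ge x) h₁₂.le
  exact ⟨fun α hα => ⟨F' α, hderiv α hα, hF'_ge α⟩, hincr,
    fun x hx y _ hxy => by linarith [hincr x y hx hxy]⟩
end

section
/- With 𝓕(α) = 1 + α + ∑_{k=3}^∞ α/(A k + α·B k), the limit lim_{α→+∞} (𝓕(α) − (1 + α)) exists and equals ∑_{n=1}^∞ 1/F n, the sum of the reciprocals of the standard Fibonacci numbers. -/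
/-!
`A k` and `B k` are Binet-type expressions which, since `φψ = -1`, are the Fibonacci numbers
`F (k - 1)` and `F (k - 2)`; so the `k`-th term of the series is `α / (F (k - 1) + α F (k - 2))`.
As `α → ∞` it increases to `1 / F (k - 2)`, and dominated convergence (the reciprocal Fibonacci
series converges by the ratio test, with ratio tending to `-ψ < 1`) lets the limit pass under the
sum.
-/

open Filter Topology Real

theorem eq_fib_of_recurrence {R : Type*} [AddMonoidWithOne R] {F : ℕ → R}
    (h1 : F 1 = 1) (h2 : F 2 = 1) (hrec : ∀ n, 3 ≤ n → F n = F (n - 1) + F (n - 2)) (n : ℕ) :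
    F (n + 1) = Nat.fib (n + 1) := by
  induction n using Nat.twoStepInduction with
  | zero => simpa using h1
  | one => simpa using h2
  | more n ih₁ ih₂ =>
    rw [hrec (n + 3) (by omega), Nat.fib_add_two, Nat.add_comm (Nat.fib (n + 1)), Nat.cast_add]
    exact congrArg₂ (· + ·) ih₂ ih₁

namespace Real

open scoped goldenRatio

theorem coe_fib_eq_div_goldenRatio_sub_goldenConj (n : ℕ) :
    (Nat.fib n : ℝ) = (φ ^ n - ψ ^ n) / (φ - ψ) := by
  rw [goldenRatio_sub_goldenConj, coe_fib_eq]

theorem coe_fib_eq_goldenRatio_mul_goldenConj_pow_succ (n : ℕ) :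
    (Nat.fib n : ℝ) = (φ * ψ ^ (n + 1) - ψ * φ ^ (n + 1)) / (φ - ψ) := by
  have hφψ : φ * ψ ^ (n + 1) - ψ * φ ^ (n + 1) = φ ^ n - ψ ^ n := by
    linear_combination (ψ ^ n - φ ^ n) * goldenRatio_mul_goldenConj
  rw [hφψ, coe_fib_eq_div_goldenRatio_sub_goldenConj]

theorem summable_inv_fib_succ : Summable fun n : ℕ => ((Nat.fib (n + 1) : ℝ))⁻¹ := by
  have hfib_pos : ∀ n, (0 : ℝ) < Nat.fib (n + 1) := fun n => mod_cast Nat.fib_pos.mpr n.succ_pos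
  refine summable_of_ratio_test_tendsto_lt_one (l := -ψ) (by linarith [neg_one_lt_goldenConj])
    (Eventually.of_forall fun n => (inv_pos.mpr (hfib_pos n)).ne') ?_
  refine ((tendsto_add_atTop_iff_nat 1).mpr tendsto_fib_div_fib_succ_atTop).congr fun n => ?_
  rw [norm_inv, norm_inv, Real.norm_of_nonneg (hfib_pos _).le,
    Real.norm_of_nonneg (hfib_pos _).le, inv_div_inv]

end Real

theorem tendsto_div_add_mul_atTop (a : ℝ) {b : ℝ} (hb : b ≠ 0) :
    Tendsto (fun α : ℝ => α / (a + α * b)) atTop (𝓝 b⁻¹) := by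
  have h : Tendsto (fun α : ℝ => (a * α⁻¹ + b)⁻¹) atTop (𝓝 b⁻¹) := by
    simpa using ((tendsto_inv_atTop_zero.const_mul a).add_const b).inv₀ (by simpa using hb)
  refine h.congr' ?_
  filter_upwards [eventually_gt_atTop 0] with α hα
  rw [← div_eq_mul_inv, div_add' _ _ _ hα.ne', inv_div, mul_comm]

theorem div_add_mul_le_inv {a b α : ℝ} (ha : 0 ≤ a) (hb : 0 < b) (hα : 0 ≤ α) :
    α / (a + α * b) ≤ b⁻¹ := by
  rcases hα.eq_or_lt with rfl | hα
  · simpa using hb.le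
  calc α / (a + α * b) ≤ α / (α * b) := by gcongr; linarith
    _ = b⁻¹ := by field_simp

theorem tendsto_tsum_div_add_mul_atTop {ι : Type*} {a b : ι → ℝ} (ha : ∀ k, 0 ≤ a k)
    (hb : ∀ k, 0 < b k) (hsum : Summable fun k => (b k)⁻¹) :
    Tendsto (fun α : ℝ => ∑' k, α / (a k + α * b k)) atTop (𝓝 (∑' k, (b k)⁻¹)) := by
  refine tendsto_tsum_of_dominated_convergence hsum
    (fun k => tendsto_div_add_mul_atTop (a k) (hb k).ne') ?_
  filter_upwards [eventually_ge_atTop 0] with α hα k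
  have hterm : 0 ≤ α / (a k + α * b k) := div_nonneg hα (by nlinarith [ha k, hb k])
  rw [Real.norm_of_nonneg hterm]
  exact div_add_mul_le_inv (ha k) (hb k) hα

/-- `𝓕(α) - (1 + α)` tends, as `α → +∞`, to the sum of the
reciprocals of the standard Fibonacci numbers `∑_{n=1}^∞ 1/F n`. -/
theorem F_limit_at_top (φ ψ : ℝ)
    (hφ : φ = (1 + Real.sqrt 5) / 2) (hψ : ψ = (1 - Real.sqrt 5) / 2)
    (A B F : ℕ → ℝ)
    (hA : ∀ n, A n = (φ ^ (n - 1) - ψ ^ (n - 1)) / (φ - ψ))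
    (hB : ∀ n, B n = (φ * ψ ^ (n - 1) - ψ * φ ^ (n - 1)) / (φ - ψ))
    (hF1 : F 1 = 1) (hF2 : F 2 = 1)
    (hFrec : ∀ n, 3 ≤ n → F n = F (n - 1) + F (n - 2))
    (𝓕 : ℝ → ℝ)
    (h𝓕 : ∀ α : ℝ, 𝓕 α = 1 + α + ∑' k : ℕ, α / (A (k + 3) + α * B (k + 3))) :
    Filter.Tendsto (fun α : ℝ => 𝓕 α - (1 + α)) Filter.atTop
      (nhds (∑' n : ℕ, 1 / F (n + 1))) := by
  obtain rfl : φ = goldenRatio := hφ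
  obtain rfl : ψ = goldenConj := hψ
  have hA' (k : ℕ) : A (k + 3) = Nat.fib (k + 2) := by
    rw [hA, coe_fib_eq_div_goldenRatio_sub_goldenConj]; rfl
  have hB' (k : ℕ) : B (k + 3) = Nat.fib (k + 1) := by
    rw [hB, coe_fib_eq_goldenRatio_mul_goldenConj_pow_succ]; rfl
  have hlim : ∑' n : ℕ, 1 / F (n + 1) = ∑' n : ℕ, ((Nat.fib (n + 1) : ℝ))⁻¹ := by
    simp only [eq_fib_of_recurrence hF1 hF2 hFrec, one_div]
  simp only [h𝓕, hA', hB', add_sub_cancel_left, hlim]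
  exact tendsto_tsum_div_add_mul_atTop (fun _ => Nat.cast_nonneg _)
    (fun k => mod_cast Nat.fib_pos.mpr k.succ_pos) summable_inv_fib_succ
end

section
/- For every integer p ≥ 2, the polynomial P_p(x) = x^p − x^{p−1} − x^{p−2} − ⋯ − x − 1 has exactly one positive real root φ₁; moreover φ ≤ φ₁ < 2 where φ = (1+√5)/2, and φ₁ = φ if and only if p = 2. -/
/-!
Since `P_p(x) = x^p (1 - ∑_{k=1}^p x^{-k})` and the sum is strictly decreasing on `(0, ∞)`,
`P_p` has at most one positive root. The recurrence `P_{p+1}(x) = x P_p(x) - 1` together with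
`φ² = φ + 1` gives `P_p(2) = 1` and `P_p(φ) = φ - φ^{p-1} ≤ 0`, so the intermediate value
theorem places a root in `[φ, 2)`; it equals `φ` exactly when `φ^{p-1} = φ`, i.e. `p = 2`.
-/

open Finset Set Real

def fibCharpoly {R : Type*} [CommRing R] (p : ℕ) (x : R) : R :=
  x ^ p - ∑ k ∈ range p, x ^ k

section CommRing

variable {R : Type*} [CommRing R]

@[simp]
theorem fibCharpoly_zero (x : R) : fibCharpoly 0 x = 1 := by
  simp [fibCharpoly]

theorem fibCharpoly_succ (p : ℕ) (x : R) : fibCharpoly (p + 1) x = x * fibCharpoly p x - 1 := by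
  simp only [fibCharpoly, sum_range_succ', pow_zero, mul_sub, mul_sum, pow_succ]
  ring_nf

theorem fibCharpoly_succ_of_sq_eq_add_one {x : R} (hx : x ^ 2 = x + 1) (p : ℕ) :
    fibCharpoly (p + 1) x = x - x ^ p := by
  induction p with
  | zero => simp [fibCharpoly_succ]
  | succ p ih => rw [fibCharpoly_succ, ih]; linear_combination hx

theorem fibCharpoly_two_eq_one (p : ℕ) : fibCharpoly p (2 : R) = 1 := by
  induction p with
  | zero => exact fibCharpoly_zero 2
  | succ p ih => rw [fibCharpoly_succ, ih]; norm_num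

end CommRing

section Field

variable {K : Type*} [Field K]

theorem pow_mul_sum_range_inv_pow {x : K} (hx : x ≠ 0) (p : ℕ) :
    x ^ p * ∑ k ∈ range p, x⁻¹ ^ (k + 1) = ∑ k ∈ range p, x ^ k := by
  induction p with
  | zero => simp
  | succ p ih =>
    rw [sum_range_succ, mul_add, pow_succ', mul_assoc, ih, ← pow_succ', ← mul_pow,
      mul_inv_cancel₀ hx, one_pow, sum_range_succ', mul_sum, pow_zero]
    simp only [pow_succ']

theorem fibCharpoly_eq_zero_iff {x : K} (hx : x ≠ 0) (p : ℕ) :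
    fibCharpoly p x = 0 ↔ ∑ k ∈ range p, x⁻¹ ^ (k + 1) = 1 := by
  rw [fibCharpoly, ← pow_mul_sum_range_inv_pow hx, ← mul_one_sub, mul_eq_zero,
    or_iff_right (pow_ne_zero _ hx), sub_eq_zero, eq_comm]

end Field

section OrderedField

variable {K : Type*} [Field K] [LinearOrder K] [IsStrictOrderedRing K]

theorem strictAntiOn_sum_range_inv_pow {p : ℕ} (hp : p ≠ 0) :
    StrictAntiOn (fun x : K ↦ ∑ k ∈ range p, x⁻¹ ^ (k + 1)) (Ioi 0) := by
  intro x hx y _ hxy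
  have hy : 0 < y := hx.trans hxy
  refine sum_lt_sum_of_nonempty (nonempty_range_iff.mpr hp) fun k _ ↦ ?_
  exact pow_lt_pow_left₀ ((inv_lt_inv₀ hy hx).mpr hxy) (inv_pos.mpr hy).le k.succ_ne_zero

theorem eq_of_fibCharpoly_eq_zero {p : ℕ} (hp : p ≠ 0) {x y : K} (hx : 0 < x) (hy : 0 < y)
    (hfx : fibCharpoly p x = 0) (hfy : fibCharpoly p y = 0) : x = y :=
  (strictAntiOn_sum_range_inv_pow hp).injOn hx hy <| by
    rw [(fibCharpoly_eq_zero_iff hx.ne' p).mp hfx, (fibCharpoly_eq_zero_iff hy.ne' p).mp hfy]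

end OrderedField

theorem continuous_fibCharpoly (p : ℕ) : Continuous (fibCharpoly p : ℝ → ℝ) := by
  unfold fibCharpoly
  fun_prop

theorem fibCharpoly_goldenRatio_eq_zero_iff (p : ℕ) : fibCharpoly p goldenRatio = 0 ↔ p = 2 := by
  cases p with
  | zero => simp
  | succ q =>
    rw [fibCharpoly_succ_of_sq_eq_add_one goldenRatio_sq, sub_eq_zero, eq_comm]
    nth_rw 2 [← pow_one goldenRatio]
    rw [pow_right_inj₀ goldenRatio_pos one_lt_goldenRatio.ne']
    omega

theorem fibCharpoly_goldenRatio_nonpos {p : ℕ} (hp : 2 ≤ p) : fibCharpoly p goldenRatio ≤ 0 := by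
  obtain ⟨q, rfl⟩ := Nat.exists_eq_add_of_le' hp
  rw [fibCharpoly_succ_of_sq_eq_add_one goldenRatio_sq, sub_nonpos]
  exact le_self_pow₀ one_lt_goldenRatio.le (by omega)

theorem exists_fibCharpoly_eq_zero_mem_Ico {p : ℕ} (hp : 2 ≤ p) :
    ∃ x ∈ Ico goldenRatio 2, fibCharpoly p x = 0 :=
  intermediate_value_Ico goldenRatio_lt_two.le (continuous_fibCharpoly p).continuousOn
    ⟨fibCharpoly_goldenRatio_nonpos hp, by rw [fibCharpoly_two_eq_one]; exact one_pos⟩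

/-- for `p ≥ 2`, the polynomial `P_p(x) = x^p - x^(p-1) - ⋯ - x - 1`
has exactly one positive real root `φ₁`; moreover `φ ≤ φ₁ < 2` where `φ` is the
golden ratio, with `φ₁ = φ` iff `p = 2`. -/
theorem charpoly_unique_positive_root (p : ℕ) (hp : 2 ≤ p) (φ : ℝ)
    (hφ : φ = (1 + Real.sqrt 5) / 2) :
    ∃ φ₁ : ℝ, 0 < φ₁ ∧ φ₁ ^ p - ∑ k ∈ Finset.range p, φ₁ ^ k = 0 ∧
      (∀ x : ℝ, 0 < x → x ^ p - ∑ k ∈ Finset.range p, x ^ k = 0 → x = φ₁) ∧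
      φ ≤ φ₁ ∧ φ₁ < 2 ∧ (φ₁ = φ ↔ p = 2) := by
  obtain rfl : φ = goldenRatio := hφ
  obtain ⟨φ₁, ⟨hφle, hlt⟩, hroot⟩ := exists_fibCharpoly_eq_zero_mem_Ico hp
  have hpos : 0 < φ₁ := goldenRatio_pos.trans_le hφle
  have hunique : ∀ x : ℝ, 0 < x → fibCharpoly p x = 0 → x = φ₁ := fun x hx hfx ↦
    eq_of_fibCharpoly_eq_zero (by omega) hx hpos hfx hroot
  refine ⟨φ₁, hpos, hroot, hunique, hφle, hlt, ?_⟩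
  rw [← fibCharpoly_goldenRatio_eq_zero_iff]
  exact ⟨fun h ↦ h ▸ hroot, fun h ↦ (hunique _ goldenRatio_pos h).symm⟩
end

section
/- For every integer p ≥ 2, the polynomial P_p(x) = x^p − x^{p−1} − ⋯ − x − 1 has no negative real root when p is odd; when p is even it has exactly one negative real root ξ, which satisfies −1 < ξ ≤ −1/φ, with ξ = −1/φ if and only if p = 2, where φ = (1+√5)/2. -/
/-!
Multiplying by `x - 1` turns `P_p(x) = 0` into `x ^ p * (2 - x) = 1` for `x ≠ 1`. For odd `p` the
left side is negative on `x < 0`. For even `p` it decreases strictly on `x ≤ 0` from `3` at `-1`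
to `0` at `0`, so it takes the value `1` exactly once, in `(-1, 0)`. At the conjugate golden ratio
`ψ = -1/φ` it equals `ψ ^ (p - 2)`, which is `≤ 1` with equality only for `p = 2`; monotonicity
turns this into `ξ ≤ ψ`, with equality only for `p = 2`.
-/

open Finset

theorem sub_geom_sum_mul_sub_one {R : Type*} [CommRing R] (x : R) (p : ℕ) :
    (x ^ p - ∑ k ∈ range p, x ^ k) * (x - 1) = 1 - x ^ p * (2 - x) := by
  linear_combination -geom_sum_mul x p

theorem sub_geom_sum_eq_zero_iff {R : Type*} [CommRing R] [IsDomain R] {x : R} (hx : x ≠ 1)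
    (p : ℕ) : x ^ p - ∑ k ∈ range p, x ^ k = 0 ↔ x ^ p * (2 - x) = 1 := by
  rw [← mul_left_inj' (sub_ne_zero.2 hx), zero_mul, sub_geom_sum_mul_sub_one, sub_eq_zero,
    eq_comm]

theorem Odd.pow_mul_two_sub_neg {p : ℕ} (hp : Odd p) {x : ℝ} (hx : x < 0) :
    x ^ p * (2 - x) < 0 :=
  mul_neg_of_neg_of_pos (hp.pow_neg hx) (by linarith)

theorem Even.strictAntiOn_pow_mul_two_sub {p : ℕ} (hp : Even p) (hp0 : p ≠ 0) :
    StrictAntiOn (fun x : ℝ => x ^ p * (2 - x)) (Set.Iic 0) := by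
  intro x hx y hy hxy
  have hy_pow : 0 ≤ y ^ p := hp.pow_nonneg y
  have hpow : y ^ p < x ^ p := by
    rw [← hp.neg_pow x, ← hp.neg_pow y]
    exact pow_lt_pow_left₀ (by linarith) (neg_nonneg.2 hy) hp0
  have hgap : 0 < (x ^ p - y ^ p) * (2 - x) + y ^ p * (y - x) :=
    add_pos_of_pos_of_nonneg (mul_pos (sub_pos.2 hpow) (by linarith [Set.mem_Iic.1 hx]))
      (mul_nonneg hy_pow (sub_nonneg.2 hxy.le))
  linarith

theorem Even.exists_pow_mul_two_sub_eq_one {p : ℕ} (hp : Even p) (hp0 : p ≠ 0) :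
    ∃ ξ ∈ Set.Ioo (-1 : ℝ) 0, ξ ^ p * (2 - ξ) = 1 := by
  have hcont : ContinuousOn (fun x : ℝ => x ^ p * (2 - x)) (Set.Icc (-1) 0) := by fun_prop
  refine intermediate_value_Ioo' (by norm_num) hcont ?_
  simp [zero_pow hp0, hp.neg_one_pow]

namespace Real

open goldenRatio

theorem goldenConj_pow_add_two_mul_two_sub (n : ℕ) : ψ ^ (n + 2) * (2 - ψ) = ψ ^ n := by
  linear_combination ψ ^ n * (1 - ψ) * goldenConj_sq

theorem abs_goldenConj_lt_one : |ψ| < 1 :=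
  abs_lt.2 ⟨neg_one_lt_goldenConj, goldenConj_neg.trans one_pos⟩

theorem goldenConj_pow_le_one (n : ℕ) : ψ ^ n ≤ 1 :=
  (le_abs_self _).trans ((abs_pow ψ n).symm ▸ pow_le_one₀ (abs_nonneg ψ) abs_goldenConj_lt_one.le)

theorem goldenConj_pow_eq_one_iff {n : ℕ} : ψ ^ n = 1 ↔ n = 0 := by
  refine ⟨fun h => by_contra fun hn => ?_, fun h => h ▸ pow_zero ψ⟩
  have habs : |ψ| ^ n = 1 := by rw [pow_abs, h, abs_one]
  exact abs_goldenConj_lt_one.ne ((pow_eq_one_iff_of_nonneg (abs_nonneg ψ) hn).1 habs)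

theorem neg_one_div_goldenRatio : -1 / φ = ψ := by
  rw [neg_div, one_div, inv_goldenRatio, neg_neg]

end Real

/-- for `p ≥ 2`, the polynomial `P_p(x) = x^p - x^(p-1) - ⋯ - x - 1`
has no negative real root when `p` is odd; when `p` is even it has exactly one
negative real root `ξ`, with `-1 < ξ ≤ -1/φ` and `ξ = -1/φ` iff `p = 2`. -/
theorem charpoly_negative_roots (p : ℕ) (hp : 2 ≤ p) (φ : ℝ)
    (hφ : φ = (1 + Real.sqrt 5) / 2) :
    (Odd p → ∀ x : ℝ, x < 0 → x ^ p - ∑ k ∈ Finset.range p, x ^ k ≠ 0) ∧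
    (Even p → ∃ ξ : ℝ, ξ < 0 ∧ ξ ^ p - ∑ k ∈ Finset.range p, ξ ^ k = 0 ∧
      (∀ x : ℝ, x < 0 → x ^ p - ∑ k ∈ Finset.range p, x ^ k = 0 → x = ξ) ∧
      -1 < ξ ∧ ξ ≤ -1 / φ ∧ (ξ = -1 / φ ↔ p = 2)) := by
  have root_iff {x : ℝ} (hx : x < 0) := sub_geom_sum_eq_zero_iff (hx.trans one_pos).ne p
  refine ⟨fun hodd x hx hroot => ((hodd.pow_mul_two_sub_neg hx).trans one_pos).ne
    ((root_iff hx).1 hroot), fun heven => ?_⟩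
  obtain ⟨m, rfl⟩ : ∃ m, p = m + 2 := ⟨p - 2, by omega⟩
  have hanti := heven.strictAntiOn_pow_mul_two_sub (by omega)
  obtain ⟨ξ, ⟨hξ_gt, hξ_neg⟩, hξ⟩ := heven.exists_pow_mul_two_sub_eq_one (by omega)
  have hψ : -1 / φ = Real.goldenConj := hφ ▸ Real.neg_one_div_goldenRatio
  have hψ_mem : Real.goldenConj ∈ Set.Iic 0 := Real.goldenConj_neg.le
  have hξ_mem : ξ ∈ Set.Iic 0 := hξ_neg.le
  refine ⟨ξ, hξ_neg, (root_iff hξ_neg).2 hξ, fun x hx hroot => ?_, hξ_gt, ?_, ?_⟩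
  · exact hanti.injOn hx.le hξ_mem (((root_iff hx).1 hroot).trans hξ.symm)
  · rw [hψ, ← hanti.le_iff_ge hψ_mem hξ_mem, hξ, Real.goldenConj_pow_add_two_mul_two_sub]
    exact Real.goldenConj_pow_le_one m
  · rw [hψ, ← hanti.injOn.eq_iff hξ_mem hψ_mem, hξ, Real.goldenConj_pow_add_two_mul_two_sub,
      eq_comm, Real.goldenConj_pow_eq_one_iff]
    omega
end

section
/- For every integer p ≥ 2, all complex roots of the polynomial P_p(x) = x^p − x^{p−1} − ⋯ − x − 1 are simple; that is, P_p has p distinct complex roots. -/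
/-!
Multiplying by `X - 1` turns `P_p` into `Q = X^(p+1) - 2 X^p + 1`, whose derivative is
`X^(p-1) ((p+1) X - 2p)`. A multiple root `z` of `P_p` is a common root of `Q` and `Q'`, which forces
`(p+1) z = 2p` and `2 z^p = p + 1`, hence `2 (2p)^p = (p+1)^(p+1)`. For `p ≥ 2` this is impossible:
`p^p > 1` would divide the coprime number `(p+1)^(p+1)`.
-/

open Polynomial

noncomputable def fibCharPoly (R : Type*) [CommRing R] (p : ℕ) : R[X] :=
  X ^ p - ∑ k ∈ Finset.range p, X ^ k

section

variable {R : Type*} [CommRing R]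

theorem degree_sum_X_pow_lt [Nontrivial R] (p : ℕ) :
    (∑ k ∈ Finset.range p, (X : R[X]) ^ k).degree < p :=
  (degree_sum_le _ _).trans_lt <| (Finset.sup_lt_iff (WithBot.bot_lt_coe p)).2 fun k hk => by
    rw [degree_X_pow]; exact WithBot.coe_lt_coe.2 (Finset.mem_range.mp hk)

theorem fibCharPoly_natDegree [Nontrivial R] (p : ℕ) : (fibCharPoly R p).natDegree = p :=
  natDegree_eq_of_degree_eq_some <| by
    rw [fibCharPoly, degree_sub_eq_left_of_degree_lt] <;> simp [degree_sum_X_pow_lt p]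

theorem X_sub_one_mul_fibCharPoly (p : ℕ) :
    (X - 1) * fibCharPoly R p = X ^ (p + 1) - 2 * X ^ p + 1 := by
  rw [fibCharPoly]
  linear_combination (-1 : R[X]) * geom_sum_mul (X : R[X]) p

end

theorem two_mul_pow_eq_of_double_root {R : Type*} [CommRing R] [IsDomain R] {p : ℕ} {z : R}
    (h : z ^ (p + 1) - 2 * z ^ p + 1 = 0) (h' : (p + 1) * z ^ (p + 1) - 2 * p * z ^ p = 0) :
    2 * (2 * p) ^ p = ((p : R) + 1) ^ (p + 1) := by
  have hzp : 2 * z ^ p = p + 1 := by linear_combination h' - (p + 1 : R) * h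
  have hzp0 : z ^ p ≠ 0 := by
    intro h0
    have : z ^ p * (z - 2) + 1 = 0 := by linear_combination h
    simp [h0] at this
  have hz : (p + 1) * z = 2 * p := by
    have : z ^ p * ((p + 1) * z - 2 * p) = 0 := by linear_combination h'
    linear_combination (mul_eq_zero.mp this).resolve_left hzp0
  calc (2 : R) * (2 * p) ^ p = ((p : R) + 1) ^ p * (2 * z ^ p) := by rw [← hz, mul_pow]; ring
    _ = ((p : R) + 1) ^ (p + 1) := by rw [hzp]; ring

theorem Nat.two_mul_two_mul_pow_ne {p : ℕ} (hp : 2 ≤ p) : 2 * (2 * p) ^ p ≠ (p + 1) ^ (p + 1) := by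
  intro h
  have hdvd : p ^ p ∣ (p + 1) ^ (p + 1) := ⟨2 * 2 ^ p, by rw [← h]; ring⟩
  have hcop : (p ^ p).Coprime ((p + 1) ^ (p + 1)) :=
    (Nat.coprime_self_add_right.mpr (Nat.coprime_one_right p)).pow _ _
  have := Nat.Coprime.eq_one_of_dvd hcop hdvd
  rw [pow_eq_one_iff] at this
  omega

theorem fibCharPoly_separable {k : Type*} [Field k] [CharZero k] {p : ℕ} (hp : 2 ≤ p) :
    (fibCharPoly k p).Separable := by
  refine (isCoprime_iff_aeval_ne_zero_of_isAlgClosed k (AlgebraicClosure k) _ _).mpr fun z => ?_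
  by_contra! ⟨hP, hP'⟩
  have hQ : z ^ (p + 1) - 2 * z ^ p + 1 = 0 := by
    simpa [hP, map_ofNat] using (congrArg (aeval z) (X_sub_one_mul_fibCharPoly (R := k) p)).symm
  have hQ' : (p + 1) * z ^ p - 2 * (p * z ^ (p - 1)) = 0 := by
    simpa [derivative_mul, derivative_X_pow, hP, hP', map_ofNat] using
      (congrArg (aeval z ∘ derivative) (X_sub_one_mul_fibCharPoly (R := k) p)).symm
  have hz : z * z ^ (p - 1) = z ^ p := mul_pow_sub_one (by omega) z
  apply Nat.two_mul_two_mul_pow_ne hp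
  exact_mod_cast two_mul_pow_eq_of_double_root hQ (by linear_combination z * hQ' + 2 * p * hz)

/-- for `p ≥ 2`, all complex roots of
`P_p(x) = x^p - x^(p-1) - ⋯ - x - 1` are simple; that is, `P_p` has `p`
distinct complex roots. -/
theorem charpoly_roots_simple (p : ℕ) (hp : 2 ≤ p) :
    let P : Polynomial ℂ :=
      Polynomial.X ^ p - ∑ k ∈ Finset.range p, Polynomial.X ^ k
    P.roots.Nodup ∧ Multiset.card P.roots = p :=
  ⟨nodup_roots (fibCharPoly_separable hp),
    IsAlgClosed.card_roots_eq_natDegree.trans (fibCharPoly_natDegree p)⟩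
end

section
/- For every integer p ≥ 2, if φ₁ denotes the unique positive real root of P_p(x) = x^p − x^{p−1} − ⋯ − x − 1, then every complex root z of P_p with z ≠ φ₁ satisfies |z| < 1. -/
/-!
Multiplying `z ^ p = ∑_{k<p} z ^ k` by `z - 1` turns it into `z ^ p (2 - z) = 1`. For a root with
`r = ‖z‖ ≥ 1`, the triangle inequality on the original equation gives `r ^ p (2 - r) ≥ 1`, while the
second form gives `r ^ p ‖2 - z‖ = 1`; hence `‖2 - z‖ ≤ 2 - ‖z‖`, which forces `z = r`. So `z` is a
positive real root, i.e. `z = φ₁`.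
-/

open Finset

theorem pow_mul_two_sub_eq_one {R : Type*} [CommRing R] {z : R} {p : ℕ}
    (h : z ^ p = ∑ k ∈ range p, z ^ k) : z ^ p * (2 - z) = 1 := by
  linear_combination (geom_sum_mul z p).symm.trans (congrArg (· * (z - 1)) h.symm)

theorem norm_pow_le_sum_norm_pow {𝕜 : Type*} [NormedDivisionRing 𝕜] {z : 𝕜} {p : ℕ}
    (h : z ^ p = ∑ k ∈ range p, z ^ k) : ‖z‖ ^ p ≤ ∑ k ∈ range p, ‖z‖ ^ k :=
  calc ‖z‖ ^ p = ‖∑ k ∈ range p, z ^ k‖ := by rw [← norm_pow, h]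
    _ ≤ ∑ k ∈ range p, ‖z ^ k‖ := norm_sum_le _ _
    _ = ∑ k ∈ range p, ‖z‖ ^ k := by simp only [norm_pow]

theorem one_le_pow_mul_two_sub {R : Type*} [CommRing R] [LinearOrder R] [IsStrictOrderedRing R]
    {r : R} {p : ℕ} (hr : 1 ≤ r) (h : r ^ p ≤ ∑ k ∈ range p, r ^ k) : 1 ≤ r ^ p * (2 - r) := by
  have hgeom := geom_sum_mul r p
  nlinarith [mul_le_mul_of_nonneg_right h (sub_nonneg.mpr hr)]

theorem Complex.ofReal_norm_eq_of_norm_sub_le {c : ℝ} {z : ℂ} (h : ‖(c : ℂ) - z‖ ≤ c - ‖z‖) :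
    (‖z‖ : ℂ) = z := by
  have hre : z.re = ‖z‖ := by
    have := ((c : ℂ) - z).re_le_norm.trans h
    simp only [sub_re, ofReal_re] at this
    linarith [z.re_le_norm]
  rw [← hre]
  exact (eq_re_of_ofReal_le (r := 0) (by simpa using re_eq_norm.mp hre)).symm

theorem charpoly_other_roots_in_unit_disc_general (p : ℕ) (φ₁ : ℝ)
    (hφ₁uniq : ∀ x : ℝ, 0 < x → x ^ p - ∑ k ∈ Finset.range p, x ^ k = 0 → x = φ₁) :
    ∀ z : ℂ, z ^ p - ∑ k ∈ Finset.range p, z ^ k = 0 → z ≠ (φ₁ : ℂ) →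
      ‖z‖ < 1 := by
  intro z hz hne
  by_contra! hz1
  have hroot : z ^ p = ∑ k ∈ range p, z ^ k := sub_eq_zero.mp hz
  have hnorm : ‖z‖ ^ p * ‖2 - z‖ = 1 := by
    simpa using congrArg norm (pow_mul_two_sub_eq_one hroot)
  have hlow := one_le_pow_mul_two_sub hz1 (norm_pow_le_sum_norm_pow hroot)
  have hle : ‖((2 : ℝ) : ℂ) - z‖ ≤ 2 - ‖z‖ := by
    refine le_of_mul_le_mul_left ?_ (pow_pos (one_pos.trans_le hz1) p)
    simpa [hnorm] using hlow
  have hreal := Complex.ofReal_norm_eq_of_norm_sub_le hle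
  have hφ : ‖z‖ = φ₁ := hφ₁uniq _ (one_pos.trans_le hz1) (by exact_mod_cast hreal ▸ hz)
  exact hne (by rw [← hreal, hφ])

/-- for `p ≥ 2`, if `φ₁` is the unique positive real root of
`P_p(x) = x^p - x^(p-1) - ⋯ - x - 1`, then every other complex root of `P_p`
lies strictly inside the unit circle. -/
theorem charpoly_other_roots_in_unit_disc (p : ℕ) (hp : 2 ≤ p) (φ₁ : ℝ)
    (hφ₁pos : 0 < φ₁)
    (hφ₁root : φ₁ ^ p - ∑ k ∈ Finset.range p, φ₁ ^ k = 0)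
    (hφ₁uniq : ∀ x : ℝ, 0 < x → x ^ p - ∑ k ∈ Finset.range p, x ^ k = 0 → x = φ₁) :
    ∀ z : ℂ, z ^ p - ∑ k ∈ Finset.range p, z ^ k = 0 → z ≠ (φ₁ : ℂ) →
      ‖z‖ < 1 :=
  charpoly_other_roots_in_unit_disc_general p φ₁ hφ₁uniq
end

section
/- For every integer n ≥ 1, the only complex number z with |z| = 1 satisfying z^{n+1} − 2·z^n + 1 = 0 is z = 1. -/
/-! A root `z` of `z ^ (n + 1) - 2 * z ^ n + 1` satisfies `z ^ n * (z - 2) = -1`, so on the unit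
circle also `‖2 - z‖ = 1`. Then `z` and `2 - z` are unit vectors whose sum `2` has norm `2`;
equality in the triangle inequality of the strictly convex plane forces `z = 2 - z`. -/

lemma Complex.norm_sub_two_eq_one_of_root {n : ℕ} {z : ℂ} (hz : ‖z‖ = 1)
    (hroot : z ^ (n + 1) - 2 * z ^ n + 1 = 0) : ‖z - 2‖ = 1 := by
  have hfactor : z ^ n * (z - 2) = -1 := by linear_combination hroot
  simpa [hz] using congrArg norm hfactor

lemma Complex.eq_one_of_norm_eq_one_of_norm_sub_two_eq_one {z : ℂ} (hz : ‖z‖ = 1)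
    (h : ‖z - 2‖ = 1) : z = 1 := by
  have hsum : ‖z + (2 - z)‖ = ‖z‖ + ‖2 - z‖ := by
    rw [add_sub_cancel, norm_sub_rev, h, hz]
    norm_num
  have hmid : z = 2 - z := eq_of_norm_eq_of_norm_add_eq (by rw [norm_sub_rev, h, hz]) hsum
  linear_combination hmid / 2

theorem G_poly_unit_circle_root_general (n : ℕ) :
    ∀ z : ℂ, ‖z‖ = 1 → z ^ (n + 1) - 2 * z ^ n + 1 = 0 → z = 1 := fun _ hz hroot =>
  Complex.eq_one_of_norm_eq_one_of_norm_sub_two_eq_one hz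
    (Complex.norm_sub_two_eq_one_of_root hz hroot)

/-- for every `n ≥ 1`, the only complex number `z` on the unit
circle with `z^(n+1) - 2·z^n + 1 = 0` is `z = 1`. -/
theorem G_poly_unit_circle_root (n : ℕ) (hn : 1 ≤ n) :
    ∀ z : ℂ, ‖z‖ = 1 → z ^ (n + 1) - 2 * z ^ n + 1 = 0 → z = 1 :=
  G_poly_unit_circle_root_general n
end

section
/- Let p ≥ 2 be an integer and let r₁, …, r_p be positive reals. Define h : ℕ → ℝ by h k = r₁ / r k for 1 ≤ k ≤ p and h k = ∑_{j=1}^{p} h (k−j) for k > p. Then h k > 0 for all k ≥ 1 and the series ∑_{k=1}^∞ 1/h k converges. -/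
/-!
Positivity is immediate by strong induction. From index `p` on, the recurrence keeps the
terms `h (k - 1)` and `h (k - 2)` among the positive summands, so `h` is nondecreasing and
`h (k + 2) ≥ h (k + 1) + h k ≥ 2 h k`. Hence `1 / h` at least halves every two steps, and
its even- and odd-indexed tails are dominated by geometric series.
-/

open Finset

theorem summable_of_nonneg_of_le_mul_two_step {u : ℕ → ℝ} {c : ℝ} (hu : ∀ n, 0 ≤ u n)
    (hc₀ : 0 ≤ c) (hc₁ : c < 1) (hstep : ∀ n, u (n + 2) ≤ c * u n) : Summable u := by
  have bound (i n : ℕ) : u (2 * n + i) ≤ c ^ n * u i := by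
    induction n with
    | zero => simp
    | succ n ih =>
      calc u (2 * (n + 1) + i) = u (2 * n + i + 2) := by ring_nf
        _ ≤ c * u (2 * n + i) := hstep _
        _ ≤ c * (c ^ n * u i) := mul_le_mul_of_nonneg_left ih hc₀
        _ = c ^ (n + 1) * u i := by ring
  have summable_shift (i : ℕ) : Summable fun n => u (2 * n + i) :=
    .of_nonneg_of_le (fun _ => hu _) (bound i)
      ((summable_geometric_of_lt_one hc₀ hc₁).mul_right (u i))
  exact .even_add_odd (summable_shift 0) (summable_shift 1)

section Recurrence

variable {p : ℕ} {h : ℕ → ℝ} (hrec : ∀ k, p < k → h k = ∑ j ∈ Icc 1 p, h (k - j))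
include hrec

theorem pos_of_recurrence (hp : 1 ≤ p) (hinit : ∀ k, 1 ≤ k → k ≤ p → 0 < h k) :
    ∀ k, 1 ≤ k → 0 < h k := by
  intro k
  induction k using Nat.strong_induction_on with
  | _ k ih =>
    intro hk
    by_cases hkp : k ≤ p
    · exact hinit k hk hkp
    · rw [hrec k (by omega)]
      refine sum_pos (fun j hj => ?_) ⟨1, mem_Icc.mpr ⟨le_rfl, hp⟩⟩
      rw [mem_Icc] at hj
      exact ih (k - j) (by omega) (by omega)

variable (hpos : ∀ k, 1 ≤ k → 0 < h k)
include hpos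

theorem sum_le_of_recurrence {k : ℕ} (hk : p < k) {s : Finset ℕ} (hs : s ⊆ Icc 1 p) :
    ∑ j ∈ s, h (k - j) ≤ h k := by
  rw [hrec k hk]
  refine sum_le_sum_of_subset_of_nonneg hs (fun j hj _ => (hpos _ ?_).le)
  rw [mem_Icc] at hj
  omega

theorem le_succ_of_recurrence (hp : 1 ≤ p) {k : ℕ} (hk : p ≤ k) : h k ≤ h (k + 1) := by
  simpa using sum_le_of_recurrence hrec hpos (k := k + 1) (by omega)
    (singleton_subset_iff.mpr (mem_Icc.mpr ⟨le_rfl, hp⟩))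

theorem two_mul_le_of_recurrence (hp : 2 ≤ p) {k : ℕ} (hk : p ≤ k) :
    2 * h k ≤ h (k + 2) := by
  have hsum := sum_le_of_recurrence hrec hpos (k := k + 2) (s := {1, 2}) (by omega)
    (by intro j; simp only [mem_insert, mem_singleton, mem_Icc]; omega)
  rw [sum_pair (by norm_num), show k + 2 - 1 = k + 1 by omega, Nat.add_sub_cancel] at hsum
  linarith [le_succ_of_recurrence hrec hpos (by omega) hk]

theorem one_div_le_half_of_recurrence (hp : 2 ≤ p) {k : ℕ} (hk : p ≤ k) :
    1 / h (k + 2) ≤ 1 / 2 * (1 / h k) := by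
  have hk₀ : 0 < h k := hpos k (by omega)
  calc 1 / h (k + 2) ≤ 1 / (2 * h k) :=
        one_div_le_one_div_of_le (by positivity) (two_mul_le_of_recurrence hrec hpos hp hk)
    _ = 1 / 2 * (1 / h k) := by rw [one_div_mul_one_div]

end Recurrence

/-- for a `p`-order type-1 Fibonacci resistor network with positive
initial resistances `r 1, …, r p`, the sequence `h k` (with `h k = r 1 / r k` for
`1 ≤ k ≤ p` and the `p`-order Fibonacci recurrence afterwards) is positive and
the series `∑_{k=1}^∞ 1 / h k` converges. -/
theorem p_order_network_summable (p : ℕ) (hp : 2 ≤ p) (r : ℕ → ℝ)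
    (hr : ∀ k, 1 ≤ k → k ≤ p → 0 < r k) (h : ℕ → ℝ)
    (hinit : ∀ k, 1 ≤ k → k ≤ p → h k = r 1 / r k)
    (hrec : ∀ k, p < k → h k = ∑ j ∈ Finset.Icc 1 p, h (k - j)) :
    (∀ k, 1 ≤ k → 0 < h k) ∧ Summable (fun k : ℕ => 1 / h (k + 1)) := by
  have hpos : ∀ k, 1 ≤ k → 0 < h k :=
    pos_of_recurrence hrec (by omega) fun k hk hkp => by
      rw [hinit k hk hkp]
      exact div_pos (hr 1 le_rfl (by omega)) (hr k hk hkp)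
  refine ⟨hpos, (summable_nat_add_iff p).mp ?_⟩
  refine summable_of_nonneg_of_le_mul_two_step (c := 1 / 2)
    (fun n => (one_div_pos.mpr (hpos _ (by omega))).le) (by norm_num) (by norm_num)
    fun n => ?_
  simpa only [add_right_comm n 2 p] using
    one_div_le_half_of_recurrence hrec hpos hp (k := n + p + 1) (by omega)
end

section
/- Let p ≥ 2 be an integer and let r₁, …, r_p be positive reals. Define h : ℕ → ℝ by h k = r₁ / r k for 1 ≤ k ≤ p and h k = ∑_{j=1}^{p} h (k−j) for k > p. Then the ratio h k / h (k+1) converges to 1/φ₁ as k → ∞, where φ₁ is the unique positive real root of P_p(x) = x^p − x^{p−1} − ⋯ − x − 1; in particular 1/φ₁ < 1. -/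
/-!
Dividing by `φ₁ ^ k` turns the recurrence into `a k = ∑ j ∈ [1, p], φ₁⁻¹ ^ j * a (k - j)`, and the
root equation says exactly that these weights sum to `1`. Each block of `p` consecutive terms of
such an averaging recurrence lies between the bounds of the previous block, and bounds for the
next block can be chosen with a gap smaller by the factor `1 - δ ^ 2`, `δ` the least weight. So
`h k / φ₁ ^ k` converges, to a positive limit since the first block is positive, and
`h k / h (k + 1) → 1 / φ₁`. The root equation with `p ≥ 2` forces `φ₁ > 1`.
-/

open Finset Filter Topology

lemma Finset.sum_mul_le_sub {ι : Type*} {s : Finset ι} {w x : ι → ℝ} {M ε δ : ℝ} {j₀ : ι}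
    (hw : ∀ j ∈ s, 0 ≤ w j) (hwsum : ∑ j ∈ s, w j = 1) (hx : ∀ j ∈ s, x j ≤ M)
    (hj₀ : j₀ ∈ s) (hxj₀ : x j₀ ≤ M - ε) (hε : 0 ≤ ε) (hδ : δ ≤ w j₀) :
    ∑ j ∈ s, w j * x j ≤ M - δ * ε := by
  have hsingle : w j₀ * (M - x j₀) ≤ ∑ j ∈ s, w j * (M - x j) :=
    single_le_sum (fun j hj => mul_nonneg (hw j hj) (sub_nonneg.2 (hx j hj))) hj₀
  have hsum : ∑ j ∈ s, w j * (M - x j) = M - ∑ j ∈ s, w j * x j := by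
    simp only [mul_sub, sum_sub_distrib, ← sum_mul, hwsum, one_mul]
  nlinarith [mul_le_mul_of_nonneg_right hδ hε, mul_le_mul_of_nonneg_left hxj₀ (hw j₀ hj₀)]

lemma Finset.sum_mul_le {ι : Type*} {s : Finset ι} {w x : ι → ℝ} {M : ℝ}
    (hw : ∀ j ∈ s, 0 ≤ w j) (hwsum : ∑ j ∈ s, w j = 1) (hx : ∀ j ∈ s, x j ≤ M) :
    ∑ j ∈ s, w j * x j ≤ M :=
  calc ∑ j ∈ s, w j * x j ≤ ∑ j ∈ s, w j * M :=
        sum_le_sum fun j hj => mul_le_mul_of_nonneg_left (hx j hj) (hw j hj)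
    _ = M := by rw [← sum_mul, hwsum, one_mul]

def IsWeightedRecurrence (p : ℕ) (w a : ℕ → ℝ) : Prop :=
  ∀ k, p ≤ k → a k = ∑ j ∈ Icc 1 p, w j * a (k - j)

lemma pos_of_sum_Icc_eq_one {p : ℕ} {w : ℕ → ℝ} (hwsum : ∑ j ∈ Icc 1 p, w j = 1) : 0 < p := by
  by_contra! h0
  simp [Nat.le_zero.1 h0] at hwsum

namespace IsWeightedRecurrence

variable {p : ℕ} {w a : ℕ → ℝ}

lemma neg (ha : IsWeightedRecurrence p w a) : IsWeightedRecurrence p w (-a) := fun k hk => by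
  simp [ha k hk, sum_neg_distrib]

lemma le_of_forall_Ico_le (ha : IsWeightedRecurrence p w a) (hw : ∀ j ∈ Icc 1 p, 0 ≤ w j)
    (hwsum : ∑ j ∈ Icc 1 p, w j = 1) {k : ℕ} {M : ℝ} (hM : ∀ i ∈ Ico k (k + p), a i ≤ M) :
    ∀ i, k ≤ i → a i ≤ M := by
  intro i
  induction i using Nat.strong_induction_on with
  | _ i ih =>
    intro hki
    by_cases hi : i < k + p
    · exact hM i (mem_Ico.2 ⟨hki, hi⟩)
    · rw [ha i (by omega)]
      exact sum_mul_le hw hwsum fun j hj => by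
        rw [mem_Icc] at hj
        exact ih (i - j) (by omega) (by omega)

lemma ge_of_forall_Ico_ge (ha : IsWeightedRecurrence p w a) (hw : ∀ j ∈ Icc 1 p, 0 ≤ w j)
    (hwsum : ∑ j ∈ Icc 1 p, w j = 1) {k : ℕ} {m : ℝ} (hm : ∀ i ∈ Ico k (k + p), m ≤ a i) :
    ∀ i, k ≤ i → m ≤ a i := fun i hi =>
  neg_le_neg_iff.1 <| ha.neg.le_of_forall_Ico_le hw hwsum (fun i hi => neg_le_neg (hm i hi)) i hi

/-- `a k` enters `a (k + p)` with weight `w p ≥ δ`, and `a (k + p)` enters each later term of the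
block `[k + p, k + 2p)` with weight at least `δ`. -/
lemma le_sub_sq_mul_of_le (ha : IsWeightedRecurrence p w a) {δ : ℝ} (hδ₀ : 0 ≤ δ) (hδ₁ : δ ≤ 1)
    (hδw : ∀ j ∈ Icc 1 p, δ ≤ w j) (hwsum : ∑ j ∈ Icc 1 p, w j = 1) {k : ℕ} {M : ℝ}
    (hM : ∀ i, k ≤ i → a i ≤ M) : ∀ i ∈ Ico (k + p) (k + p + p), a i ≤ M - δ ^ 2 * (M - a k) := by
  have hw : ∀ j ∈ Icc 1 p, 0 ≤ w j := fun j hj => hδ₀.trans (hδw j hj)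
  have hp : 0 < p := pos_of_sum_Icc_eq_one hwsum
  have hgap : 0 ≤ M - a k := sub_nonneg.2 (hM k le_rfl)
  have hfirst : a (k + p) ≤ M - δ * (M - a k) := by
    rw [ha (k + p) (by omega)]
    exact sum_mul_le_sub (x := fun j => a (k + p - j)) hw hwsum
      (fun j hj => hM _ (by simp at hj; omega)) (j₀ := p)
      (by simp; omega) (by simp) hgap (hδw p (by simp; omega))
  intro i hi
  rw [mem_Ico] at hi
  have hsq : δ * (δ * (M - a k)) ≤ δ * (M - a k) := by
    nlinarith [mul_le_mul_of_nonneg_right hδ₁ (mul_nonneg hδ₀ hgap)]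
  rcases eq_or_lt_of_le hi.1 with rfl | hlt
  · linarith [sq δ]
  · rw [ha i (by omega)]
    have := sum_mul_le_sub (x := fun j => a (i - j)) hw hwsum
      (fun j hj => hM _ (by simp at hj; omega)) (j₀ := i - (k + p))
      (by simp; omega) (by rw [show i - (i - (k + p)) = k + p by omega]; exact hfirst)
      (mul_nonneg hδ₀ hgap) (hδw _ (by simp; omega))
    linarith [sq δ]

lemma exists_bounds_next_block (ha : IsWeightedRecurrence p w a) {δ : ℝ} (hδ₀ : 0 ≤ δ) (hδ₁ : δ ≤ 1)
    (hδw : ∀ j ∈ Icc 1 p, δ ≤ w j) (hwsum : ∑ j ∈ Icc 1 p, w j = 1) {k : ℕ} {m M : ℝ}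
    (hmM : ∀ i ∈ Ico k (k + p), m ≤ a i ∧ a i ≤ M) :
    ∃ m' M', M' - m' = (1 - δ ^ 2) * (M - m) ∧
      ∀ i ∈ Ico (k + p) (k + p + p), m' ≤ a i ∧ a i ≤ M' := by
  have hw : ∀ j ∈ Icc 1 p, 0 ≤ w j := fun j hj => hδ₀.trans (hδw j hj)
  have hle := ha.le_sub_sq_mul_of_le hδ₀ hδ₁ hδw hwsum
    (ha.le_of_forall_Ico_le hw hwsum fun i hi => (hmM i hi).2)
  have hge := ha.neg.le_sub_sq_mul_of_le hδ₀ hδ₁ hδw hwsum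
    (ha.neg.le_of_forall_Ico_le hw hwsum fun i hi => neg_le_neg (hmM i hi).1)
  refine ⟨m + δ ^ 2 * (a k - m), M - δ ^ 2 * (M - a k), by ring, fun i hi => ?_⟩
  have := hge i hi
  simp only [Pi.neg_apply] at this
  constructor <;> linarith [hle i hi]

lemma exists_tendsto (ha : IsWeightedRecurrence p w a) (hw : ∀ j ∈ Icc 1 p, 0 < w j)
    (hwsum : ∑ j ∈ Icc 1 p, w j = 1) : ∃ L, Tendsto a atTop (𝓝 L) := by
  have hp : 0 < p := pos_of_sum_Icc_eq_one hwsum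
  obtain ⟨j₁, hj₁, hmin⟩ := (Icc 1 p).exists_min_image w ⟨1, by simp; omega⟩
  set δ := w j₁
  have hδ₀ : 0 < δ := hw j₁ hj₁
  have hδ₁ : δ ≤ 1 := hwsum ▸ single_le_sum (fun j hj => (hw j hj).le) hj₁
  have hrange : (range p).Nonempty := ⟨0, by simpa⟩
  obtain ⟨i₀, -, hi₀⟩ := (range p).exists_min_image a hrange
  obtain ⟨i₁, -, hi₁⟩ := (range p).exists_max_image a hrange
  have hblocks : ∀ n : ℕ, ∃ m M, M - m = (1 - δ ^ 2) ^ n * (a i₁ - a i₀) ∧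
      ∀ i ∈ Ico (n * p) (n * p + p), m ≤ a i ∧ a i ≤ M := by
    intro n
    induction n with
    | zero =>
      refine ⟨a i₀, a i₁, by simp, fun i hi => ?_⟩
      rw [zero_mul, zero_add, ← range_eq_Ico] at hi
      exact ⟨hi₀ i hi, hi₁ i hi⟩
    | succ n ih =>
      obtain ⟨m, M, hwidth, hmM⟩ := ih
      obtain ⟨m', M', hwidth', hmM'⟩ := ha.exists_bounds_next_block hδ₀.le hδ₁ hmin hwsum hmM
      exact ⟨m', M', by rw [hwidth', hwidth]; ring, by simpa [add_mul] using hmM'⟩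
  have hwidth_tendsto : Tendsto (fun n : ℕ => (1 - δ ^ 2) ^ n * (a i₁ - a i₀)) atTop (𝓝 0) := by
    simpa using (tendsto_pow_atTop_nhds_zero_of_lt_one (by nlinarith) (by nlinarith)).mul_const
      (a i₁ - a i₀)
  refine cauchySeq_tendsto_of_complete (Metric.cauchySeq_iff'.2 fun ε hε => ?_)
  obtain ⟨n, hn⟩ := (hwidth_tendsto.eventually (gt_mem_nhds hε)).exists
  obtain ⟨m, M, hwidth, hmM⟩ := hblocks n
  have hw₀ : ∀ j ∈ Icc 1 p, 0 ≤ w j := fun j hj => (hw j hj).le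
  have hle := ha.le_of_forall_Ico_le hw₀ hwsum fun i hi => (hmM i hi).2
  have hge := ha.ge_of_forall_Ico_ge hw₀ hwsum fun i hi => (hmM i hi).1
  refine ⟨n * p, fun i hi => ?_⟩
  rw [Real.dist_eq, abs_sub_lt_iff]
  constructor <;> linarith [hle i hi, hge i hi, hle (n * p) le_rfl, hge (n * p) le_rfl]

lemma pos_of_tendsto (ha : IsWeightedRecurrence p w a) (hw : ∀ j ∈ Icc 1 p, 0 ≤ w j)
    (hwsum : ∑ j ∈ Icc 1 p, w j = 1) (hpos : ∀ i < p, 0 < a i) {L : ℝ}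
    (hL : Tendsto a atTop (𝓝 L)) : 0 < L := by
  obtain ⟨i₀, hi₀p, hi₀⟩ :=
    (range p).exists_min_image a ⟨0, by simpa using pos_of_sum_Icc_eq_one hwsum⟩
  have hge := ha.ge_of_forall_Ico_ge hw hwsum (k := 0) fun i hi => hi₀ i (by simpa using hi)
  exact (hpos i₀ (by simpa using hi₀p)).trans_le (ge_of_tendsto' hL fun i => hge i (Nat.zero_le i))

end IsWeightedRecurrence

lemma one_lt_of_pow_eq_sum_range {p : ℕ} {x : ℝ} (hp : 2 ≤ p) (hx : 0 < x)
    (hroot : x ^ p = ∑ k ∈ range p, x ^ k) : 1 < x := by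
  by_contra! hx₁
  have hle : p • x ^ p ≤ ∑ k ∈ range p, x ^ k := by
    simpa using card_nsmul_le_sum (range p) _ _ fun k hk =>
      pow_le_pow_of_le_one hx.le hx₁ (mem_range.1 hk).le
  rw [← hroot, nsmul_eq_mul] at hle
  have : (2 : ℝ) ≤ p := by exact_mod_cast hp
  nlinarith [pow_pos hx p]

lemma sum_Icc_sub_eq_sum_range (f : ℕ → ℝ) (p : ℕ) :
    ∑ j ∈ Icc 1 p, f (p - j) = ∑ k ∈ range p, f k := by
  rw [← sum_range_reflect, ← Ico_add_one_right_eq_Icc, sum_Ico_eq_sum_range]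
  refine sum_congr (by simp) fun k _ => ?_
  congr 1; omega

lemma sum_Icc_inv_pow_eq_one {p : ℕ} {x : ℝ} (hx : x ≠ 0) (hroot : x ^ p = ∑ k ∈ range p, x ^ k) :
    ∑ j ∈ Icc 1 p, x⁻¹ ^ j = 1 := by
  have hscaled : x ^ p * ∑ j ∈ Icc 1 p, x⁻¹ ^ j = ∑ j ∈ Icc 1 p, x ^ (p - j) := by
    rw [mul_sum]
    refine sum_congr rfl fun j hj => ?_
    rw [pow_sub₀ _ hx (mem_Icc.1 hj).2, inv_pow]
  rw [sum_Icc_sub_eq_sum_range (x ^ ·), ← hroot] at hscaled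
  exact (mul_eq_left₀ (pow_ne_zero p hx)).1 hscaled

lemma isWeightedRecurrence_div_pow {p : ℕ} {x : ℝ} {h : ℕ → ℝ} (hx : x ≠ 0)
    (hrec : ∀ k, p < k → h k = ∑ j ∈ Icc 1 p, h (k - j)) :
    IsWeightedRecurrence p (fun j => x⁻¹ ^ j) (fun k => h (k + 1) / x ^ (k + 1)) := by
  intro k hk
  dsimp only
  rw [hrec (k + 1) (by omega), sum_div]
  refine sum_congr rfl fun j hj => ?_
  obtain ⟨hj₁, hjp⟩ := mem_Icc.1 hj
  rw [show k + 1 - j = k - j + 1 by omega, show k + 1 = j + (k - j + 1) by omega, pow_add, inv_pow]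
  field_simp

lemma tendsto_div_succ_of_tendsto_div_pow {h : ℕ → ℝ} {x L : ℝ} (hx : x ≠ 0) (hL : L ≠ 0)
    (hlim : Tendsto (fun k => h k / x ^ k) atTop (𝓝 L)) :
    Tendsto (fun k => h k / h (k + 1)) atTop (𝓝 x⁻¹) := by
  have hratio := (hlim.div (hlim.comp (tendsto_add_atTop_nat 1)) hL).div_const x
  rw [div_self hL, one_div] at hratio
  refine hratio.congr fun k => ?_
  by_cases hk : h (k + 1) = 0
  · simp [hk]
  · show h k / x ^ k / (h (k + 1) / x ^ (k + 1)) / x = _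
    rw [pow_succ]
    field_simp

theorem p_order_network_ratio_limit_general (p : ℕ) (hp : 2 ≤ p) (φ₁ : ℝ)
    (hφ₁pos : 0 < φ₁)
    (hφ₁root : φ₁ ^ p - ∑ k ∈ Finset.range p, φ₁ ^ k = 0)
    (r : ℕ → ℝ) (hr : ∀ k, 1 ≤ k → k ≤ p → 0 < r k) (h : ℕ → ℝ)
    (hinit : ∀ k, 1 ≤ k → k ≤ p → h k = r 1 / r k)
    (hrec : ∀ k, p < k → h k = ∑ j ∈ Finset.Icc 1 p, h (k - j)) :
    Filter.Tendsto (fun k => h k / h (k + 1)) Filter.atTop (nhds (1 / φ₁)) ∧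
      1 / φ₁ < 1 := by
  have hroot : φ₁ ^ p = ∑ k ∈ range p, φ₁ ^ k := sub_eq_zero.1 hφ₁root
  have hne : φ₁ ≠ 0 := hφ₁pos.ne'
  have hweights : ∀ j ∈ Icc 1 p, 0 < φ₁⁻¹ ^ j := fun j _ => by positivity
  have hwsum := sum_Icc_inv_pow_eq_one hne hroot
  have hnorm := isWeightedRecurrence_div_pow hne hrec
  obtain ⟨L, hL⟩ := hnorm.exists_tendsto hweights hwsum
  have hinitial : ∀ i < p, 0 < h (i + 1) / φ₁ ^ (i + 1) := fun i hi => by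
    rw [hinit (i + 1) (by omega) (by omega)]
    have := hr 1 le_rfl (by omega)
    have := hr (i + 1) (by omega) (by omega)
    positivity
  have hLpos := hnorm.pos_of_tendsto (fun j hj => (hweights j hj).le) hwsum hinitial hL
  refine ⟨?_, (div_lt_one hφ₁pos).2 (one_lt_of_pow_eq_sum_range hp hφ₁pos hroot)⟩
  rw [one_div]
  exact tendsto_div_succ_of_tendsto_div_pow hne hLpos.ne' ((tendsto_add_atTop_iff_nat 1).1 hL)

/-- for a `p`-order type-1 Fibonacci resistor network with positive
initial resistances, the ratio `h k / h (k+1)` tends to `1/φ₁`, where `φ₁` is the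
unique positive real root of `P_p(x) = x^p - x^(p-1) - ⋯ - x - 1`; in particular
`1/φ₁ < 1`. -/
theorem p_order_network_ratio_limit (p : ℕ) (hp : 2 ≤ p) (φ₁ : ℝ)
    (hφ₁pos : 0 < φ₁)
    (hφ₁root : φ₁ ^ p - ∑ k ∈ Finset.range p, φ₁ ^ k = 0)
    (hφ₁uniq : ∀ x : ℝ, 0 < x → x ^ p - ∑ k ∈ Finset.range p, x ^ k = 0 → x = φ₁)
    (r : ℕ → ℝ) (hr : ∀ k, 1 ≤ k → k ≤ p → 0 < r k) (h : ℕ → ℝ)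
    (hinit : ∀ k, 1 ≤ k → k ≤ p → h k = r 1 / r k)
    (hrec : ∀ k, p < k → h k = ∑ j ∈ Finset.Icc 1 p, h (k - j)) :
    Filter.Tendsto (fun k => h k / h (k + 1)) Filter.atTop (nhds (1 / φ₁)) ∧
      1 / φ₁ < 1 :=
  p_order_network_ratio_limit_general p hp φ₁ hφ₁pos hφ₁root r hr h hinit hrec
end

section
/- Let p ≥ 2 be an integer. For each i ∈ {1, …, p} define w⁽ⁱ⁾ : ℕ → ℝ by w⁽ⁱ⁾ k = 1 if k = i and 0 for all other k ≤ p, and w⁽ⁱ⁾ k = ∑_{j=1}^{p} w⁽ⁱ⁾ (k−j) for k > p. Then w⁽¹⁾ k > 0 and w⁽ⁱ⁾ k ≥ 0 for all k > p and all i, and the sequence of partial sums of the series ∑_{k=p+1}^∞ 1/( w⁽¹⁾ k + ∑_{i=2}^{p} t_i · w⁽ⁱ⁾ k ) converges uniformly in (t₂, …, t_p) on [0, +∞)^{p−1}. -/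
/-!
Solutions of the recurrence with nonnegative initial data stay nonnegative, so `w⁽¹⁾` satisfies
`w⁽¹⁾ k + w⁽¹⁾ (k + 1) ≤ w⁽¹⁾ (k + 2)` for `k > p`, with `w⁽¹⁾ (p + 1), w⁽¹⁾ (p + 2) ≥ 1`. Hence it
grows at least like `(3/2)^k`, and `1 / w⁽¹⁾ k`, which dominates the `k`-th term for every
`t ≥ 0`, is summable: the Weierstrass M-test gives the uniform convergence.
-/

open Finset Filter

def IsPFibonacci (p : ℕ) (h : ℕ → ℝ) : Prop :=
  ∀ k, p < k → h k = ∑ j ∈ Icc 1 p, h (k - j)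

namespace IsPFibonacci

variable {p : ℕ} {h : ℕ → ℝ}

theorem nonneg (hh : IsPFibonacci p h) (hinit : ∀ k, 1 ≤ k → k ≤ p → 0 ≤ h k) :
    ∀ k, 1 ≤ k → 0 ≤ h k := by
  intro k
  induction k using Nat.strong_induction_on with
  | _ k ih =>
    intro hk
    rcases le_or_gt k p with hkp | hpk
    · exact hinit k hk hkp
    · rw [hh k hpk]
      refine sum_nonneg fun j hj => ?_
      rw [mem_Icc] at hj
      exact ih (k - j) (by omega) (by omega)

theorem sum_le (hh : IsPFibonacci p h) (hnn : ∀ k, 1 ≤ k → 0 ≤ h k) {k : ℕ} (hk : p < k)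
    {s : Finset ℕ} (hs : s ⊆ Icc 1 p) : ∑ j ∈ s, h (k - j) ≤ h k := by
  rw [hh k hk]
  refine sum_le_sum_of_subset_of_nonneg hs fun j hj _ => hnn _ ?_
  rw [mem_Icc] at hj
  omega

theorem le_of_mem (hh : IsPFibonacci p h) (hnn : ∀ k, 1 ≤ k → 0 ≤ h k) {k j : ℕ} (hk : p < k)
    (hj : j ∈ Icc 1 p) : h (k - j) ≤ h k := by
  simpa using hh.sum_le hnn hk (singleton_subset_iff.mpr hj)

theorem add_le (hh : IsPFibonacci p h) (hnn : ∀ k, 1 ≤ k → 0 ≤ h k) (hp : 2 ≤ p) {k : ℕ}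
    (hk : p < k + 2) : h k + h (k + 1) ≤ h (k + 2) := by
  have hs : ({2, 1} : Finset ℕ) ⊆ Icc 1 p := by
    intro j hj
    simp only [mem_insert, mem_singleton] at hj
    rw [mem_Icc]
    omega
  simpa [sum_pair] using hh.sum_le hnn hk hs

end IsPFibonacci

section FibonacciGrowth

variable {a : ℕ → ℝ} (h0 : 1 ≤ a 0) (h1 : 1 ≤ a 1) (hadd : ∀ n, a n + a (n + 1) ≤ a (n + 2))
include h0 h1 hadd

/-- `3/2` works as a growth rate because `(3/2)^2 ≤ 1 + 3/2`. -/
theorem three_halves_pow_le_of_add_le : ∀ n, (3 / 2 : ℝ) ^ n ≤ 3 / 2 * a n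
  | 0 => by linarith
  | 1 => by linarith
  | n + 2 => by
    have ih₀ := three_halves_pow_le_of_add_le n
    have ih₁ := three_halves_pow_le_of_add_le (n + 1)
    have hpow : (0 : ℝ) ≤ (3 / 2) ^ n := by positivity
    calc (3 / 2 : ℝ) ^ (n + 2) ≤ (3 / 2) ^ n + (3 / 2) ^ (n + 1) := by
          rw [pow_succ, pow_succ]; linarith
      _ ≤ 3 / 2 * (a n + a (n + 1)) := by linarith
      _ ≤ 3 / 2 * a (n + 2) := by linarith [hadd n]

theorem pos_of_add_le (n : ℕ) : 0 < a n := by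
  have hgrowth := three_halves_pow_le_of_add_le h0 h1 hadd n
  have hpow : (0 : ℝ) < (3 / 2) ^ n := by positivity
  linarith

theorem summable_inv_of_add_le : Summable fun n => (a n)⁻¹ := by
  have hgeom : Summable fun n => 3 / 2 * (2 / 3 : ℝ) ^ n :=
    (summable_geometric_of_lt_one (by norm_num) (by norm_num)).mul_left _
  refine hgeom.of_nonneg_of_le (fun n => (inv_pos.mpr (pos_of_add_le h0 h1 hadd n)).le)
    fun n => ?_
  have hpow := three_halves_pow_le_of_add_le h0 h1 hadd n
  have hpos := pos_of_add_le h0 h1 hadd n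
  have hinv : (2 / 3 : ℝ) ^ n = ((3 / 2) ^ n)⁻¹ := by rw [← inv_pow]; norm_num
  rw [hinv, ← div_eq_mul_inv, le_div_iff₀ (by positivity), inv_mul_le_iff₀ hpos]
  linarith

end FibonacciGrowth

theorem tendstoUniformlyOn_sum_Icc_of_norm_le {β F : Type*} [NormedAddCommGroup F]
    [CompleteSpace F] {f : ℕ → β → F} {u : ℕ → ℝ} {s : Set β} (m : ℕ) (hu : Summable u)
    (hfu : ∀ n x, x ∈ s → ‖f (m + n) x‖ ≤ u n) :
    TendstoUniformlyOn (fun N x => ∑ k ∈ Icc m N, f k x) (fun x => ∑' n, f (m + n) x) atTop s := by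
  have hshift : Tendsto (fun N => N + 1 - m) atTop atTop :=
    (tendsto_sub_atTop_nat m).comp (tendsto_add_atTop_nat 1)
  intro U hU
  filter_upwards [hshift.eventually (tendstoUniformlyOn_tsum_nat hu hfu U hU)] with N hN x hx
  rw [← Ico_add_one_right_eq_Icc, sum_Ico_eq_sum_range]
  exact hN x hx

/-- for the basis solutions `w i` (`i = 1, …, p`) of the `p`-order
Fibonacci recurrence (with initial data `w i k = δ_{ik}` for `1 ≤ k ≤ p`), one has
`w 1 k > 0` and `w i k ≥ 0` for all `k > p`, and the partial sums of
`∑_{k=p+1}^∞ 1/(w 1 k + ∑_{i=2}^p t i · w i k)` converge uniformly in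
`(t 2, …, t p)` on `[0, +∞)^(p-1)`. -/
theorem p_order_basis_uniform_convergence (p : ℕ) (hp : 2 ≤ p)
    (w : ℕ → ℕ → ℝ)
    (hinit : ∀ i, 1 ≤ i → i ≤ p → ∀ k, 1 ≤ k → k ≤ p →
      w i k = if k = i then 1 else 0)
    (hrec : ∀ i, 1 ≤ i → i ≤ p → ∀ k, p < k →
      w i k = ∑ j ∈ Finset.Icc 1 p, w i (k - j)) :
    (∀ k, p < k → 0 < w 1 k) ∧
    (∀ i, 1 ≤ i → i ≤ p → ∀ k, p < k → 0 ≤ w i k) ∧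
    ∃ S : (ℕ → ℝ) → ℝ,
      TendstoUniformlyOn
        (fun (n : ℕ) (t : ℕ → ℝ) =>
          ∑ k ∈ Finset.Icc (p + 1) n,
            1 / (w 1 k + ∑ i ∈ Finset.Icc 2 p, t i * w i k))
        S Filter.atTop {t : ℕ → ℝ | ∀ i, 2 ≤ i → i ≤ p → 0 ≤ t i} := by
  have hnn : ∀ i, 1 ≤ i → i ≤ p → ∀ k, 1 ≤ k → 0 ≤ w i k := fun i hi hip =>
    IsPFibonacci.nonneg (hrec i hi hip) fun k hk hkp => by
      rw [hinit i hi hip k hk hkp]; split_ifs <;> norm_num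
  have hw : IsPFibonacci p (w 1) := hrec 1 le_rfl (by omega)
  have hnn₁ := hnn 1 le_rfl (by omega)
  have h0 : 1 ≤ w 1 (p + 1 + 0) := by
    have hle := hw.le_of_mem hnn₁ (k := p + 1) (j := p) (by omega) (by simp; omega)
    rwa [Nat.add_sub_cancel_left, hinit 1 le_rfl (by omega) 1 le_rfl (by omega), if_pos rfl]
      at hle
  have h1 : 1 ≤ w 1 (p + 1 + 1) :=
    h0.trans (hw.le_of_mem hnn₁ (k := p + 1 + 1) (j := 1) (by omega) (by simp; omega))
  have hadd (n : ℕ) : w 1 (p + 1 + n) + w 1 (p + 1 + (n + 1)) ≤ w 1 (p + 1 + (n + 2)) :=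
    hw.add_le hnn₁ hp (by omega)
  refine ⟨fun k hk => ?_, fun i hi hip k hk => hnn i hi hip k (by omega), _,
    tendstoUniformlyOn_sum_Icc_of_norm_le (p + 1) (summable_inv_of_add_le h0 h1 hadd)
      fun n t ht => ?_⟩
  · obtain ⟨n, rfl⟩ := Nat.exists_eq_add_of_lt hk
    rw [add_right_comm]
    exact pos_of_add_le h0 h1 hadd n
  · have hpos := pos_of_add_le h0 h1 hadd n
    have hsum : 0 ≤ ∑ i ∈ Icc 2 p, t i * w i (p + 1 + n) := sum_nonneg fun i hi => by
      rw [mem_Icc] at hi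
      exact mul_nonneg (ht i hi.1 hi.2) (hnn i (by omega) hi.2 _ (by omega))
    rw [Real.norm_of_nonneg (one_div_nonneg.mpr (by positivity)), one_div]
    exact inv_anti₀ hpos (le_add_of_nonneg_right hsum)
end
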